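/- arXiv:math/0511106 — 5 statements merged into one kernel-verified Lean document; each statement's English description precedes it below -/
import Mathlib

section
/- For all y ≤ 0, (√π/2)·e^{-y²} ≤ ∫_{-∞}^{y} e^{-x²/2} dx ≤ √(π/2)·e^{-y²/2}. -/
open Real MeasureTheory Set

lemma shift_Iic (c : ℝ) (f : ℝ → ℝ) :
    (∫ x in Set.Iic c, f x) = ∫ x in Set.Iic 0, f (x + c) := by
  have A : MeasurableEmbedding fun x : ℝ => x + c :=
    (Homeomorph.addRight c).isClosedEmbedding.measurableEmbedding
  have h := A.setIntegral_map (μ := volume) f (Set.Iic c)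
  rw [map_add_right_eq_self] at h
  have hpre : (fun x : ℝ => x + c) ⁻¹' Set.Iic c = Set.Iic 0 := by
    ext x; simp
  rw [h, hpre]

lemma gaussian_Iic (b : ℝ) (hb : 0 < b) :
    (∫ x in Set.Iic (0:ℝ), Real.exp (-b * x ^ 2)) = Real.sqrt (π / b) / 2 := by
  have h := integral_comp_neg_Ioi (0:ℝ) (fun x => Real.exp (-b * x ^ 2))
  rw [neg_zero] at h
  rw [← h, ← integral_gaussian_Ioi b]
  refine setIntegral_congr_fun measurableSet_Ioi (fun x _ => ?_)
  simp [neg_sq]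

/-- For `y ≤ 0`, `(√π/2)·e^{-y²} ≤ ∫_{-∞}^y e^{-x²/2} dx ≤ √(π/2)·e^{-y²/2}`. -/
theorem gaussian_lower_tail_bounds (y : ℝ) (hy : y ≤ 0) :
    Real.sqrt π / 2 * Real.exp (-y ^ 2) ≤ (∫ x in Set.Iic y, Real.exp (-x ^ 2 / 2)) ∧
    (∫ x in Set.Iic y, Real.exp (-x ^ 2 / 2)) ≤ Real.sqrt (π / 2) * Real.exp (-y ^ 2 / 2) := by
  have key : (∫ x in Set.Iic y, Real.exp (-x ^ 2 / 2))
      = ∫ x in Set.Iic (0:ℝ), Real.exp (-(x + y) ^ 2 / 2) :=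
    shift_Iic y (fun x => Real.exp (-x ^ 2 / 2))
  have int1 : IntegrableOn (fun x : ℝ => Real.exp (-(x + y) ^ 2 / 2)) (Set.Iic 0) := by
    have : Integrable (fun x : ℝ => Real.exp (-(2⁻¹ : ℝ) * x ^ 2)) :=
      integrable_exp_neg_mul_sq (by norm_num)
    have h2 := (this.comp_add_right y).integrableOn (s := Set.Iic (0:ℝ))
    refine h2.congr_fun (fun x _ => ?_) measurableSet_Iic
    ring_nf
  have int2 : IntegrableOn (fun x : ℝ => Real.exp (-y ^ 2) * Real.exp (-x ^ 2)) (Set.Iic 0) := by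
    have : Integrable (fun x : ℝ => Real.exp (-y ^ 2) * Real.exp (-(1:ℝ) * x ^ 2)) :=
      (integrable_exp_neg_mul_sq one_pos).const_mul _
    refine this.integrableOn.congr_fun (fun x _ => ?_) measurableSet_Iic
    norm_num
  have int3 : IntegrableOn
      (fun x : ℝ => Real.exp (-y ^ 2 / 2) * Real.exp (-x ^ 2 / 2)) (Set.Iic 0) := by
    have : Integrable (fun x : ℝ => Real.exp (-y ^ 2 / 2) * Real.exp (-(2⁻¹:ℝ) * x ^ 2)) :=
      (integrable_exp_neg_mul_sq (by norm_num)).const_mul _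
    refine this.integrableOn.congr_fun (fun x _ => ?_) measurableSet_Iic
    ring_nf
  have g1 : (∫ x in Set.Iic (0:ℝ), Real.exp (-x ^ 2)) = Real.sqrt π / 2 := by
    have := gaussian_Iic 1 one_pos
    simpa using this
  have g2 : (∫ x in Set.Iic (0:ℝ), Real.exp (-x ^ 2 / 2)) = Real.sqrt (π / 2) := by
    have h := gaussian_Iic 2⁻¹ (by norm_num)
    have e : ∀ x : ℝ, -(2⁻¹:ℝ) * x ^ 2 = -x ^ 2 / 2 := fun x => by ring
    simp_rw [e] at h
    rw [h, show π / (2:ℝ)⁻¹ = (π / 2) * 4 by ring,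
      Real.sqrt_mul (by positivity),
      show Real.sqrt 4 = 2 by
        rw [show (4:ℝ) = 2 ^ 2 by norm_num, Real.sqrt_sq (by norm_num)]]
    ring
  constructor
  · rw [key]
    calc Real.sqrt π / 2 * Real.exp (-y ^ 2)
        = ∫ x in Set.Iic (0:ℝ), Real.exp (-y ^ 2) * Real.exp (-x ^ 2) := by
          rw [integral_const_mul, g1]; ring
      _ ≤ ∫ x in Set.Iic (0:ℝ), Real.exp (-(x + y) ^ 2 / 2) := by
          refine setIntegral_mono_on int2 int1 measurableSet_Iic (fun x hx => ?_)
          rw [← Real.exp_add]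
          apply Real.exp_le_exp.mpr
          nlinarith [sq_nonneg (x - y)]
  · rw [key]
    calc (∫ x in Set.Iic (0:ℝ), Real.exp (-(x + y) ^ 2 / 2))
        ≤ ∫ x in Set.Iic (0:ℝ), Real.exp (-y ^ 2 / 2) * Real.exp (-x ^ 2 / 2) := by
          refine setIntegral_mono_on int1 int3 measurableSet_Iic (fun x hx => ?_)
          rw [← Real.exp_add]
          apply Real.exp_le_exp.mpr
          have hx0 : x ≤ 0 := hx
          nlinarith [mul_nonneg (neg_nonneg.mpr hx0) (neg_nonneg.mpr hy)]
      _ = Real.sqrt (π / 2) * Real.exp (-y ^ 2 / 2) := by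
          rw [integral_const_mul, g2]; ring
end

section
/- For all y ≤ 0, √(π/2)·e^{-y²/2} ≤ ∫_{-∞}^{-y} e^{-x²/2} dx ≤ √π·e^{y²/2}. -/
open Real MeasureTheory Set

lemma gaussian_Iic_zero (b : ℝ) (hb : 0 < b) :
    ∫ x in Iic (0:ℝ), Real.exp (-b * x ^ 2) = Real.sqrt (π / b) / 2 := by
  have h : ∫ x in Iic (0:ℝ), Real.exp (-b * (-x) ^ 2) = ∫ x in Ioi (-(0:ℝ)), Real.exp (-b * x ^ 2) :=
    integral_comp_neg_Iic 0 (fun x => Real.exp (-b * x ^ 2))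
  simp only [neg_neg, neg_zero, even_two, Even.neg_pow] at h
  rw [h, integral_gaussian_Ioi]

lemma shift_int (y : ℝ) :
    (∫ x in Iic (-y), Real.exp (-(1/2) * x ^ 2))
      = ∫ x in Iic (0:ℝ), Real.exp (-(1/2) * (x - y) ^ 2) := by
  have h := MeasureTheory.integral_sub_right_eq_self (μ := volume)
    (fun x => (Iic (-y)).indicator (fun t => Real.exp (-(1/2) * t ^ 2)) x) y
  rw [integral_indicator measurableSet_Iic] at h
  rw [← h, ← integral_indicator measurableSet_Iic]
  congr 1
  funext x
  by_cases hx : x ≤ 0 <;>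
    simp [Set.indicator, hx, show x - y ≤ -y ↔ x ≤ 0 from by constructor <;> intro <;> linarith]

/-- For `y ≤ 0`, `√(π/2)·e^{-y²/2} ≤ ∫_{-∞}^{-y} e^{-x²/2} dx ≤ √π·e^{y²/2}`. -/
theorem gaussian_upper_tail_bounds (y : ℝ) (hy : y ≤ 0) :
    Real.sqrt (π / 2) * Real.exp (-y ^ 2 / 2) ≤ (∫ x in Set.Iic (-y), Real.exp (-x ^ 2 / 2)) ∧
    (∫ x in Set.Iic (-y), Real.exp (-x ^ 2 / 2)) ≤ Real.sqrt π * Real.exp (y ^ 2 / 2) := by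
  have hrw : ∀ x : ℝ, -x ^ 2 / 2 = -(1/2) * x ^ 2 := fun x => by ring
  simp_rw [hrw, shift_int y]
  have hint : Integrable (fun x : ℝ => Real.exp (-(1/2) * (x - y) ^ 2)) :=
    (integrable_exp_neg_mul_sq (by norm_num)).comp_sub_right y
  have hint2 : Integrable (fun x : ℝ => Real.exp (-(1/2) * x ^ 2)) :=
    integrable_exp_neg_mul_sq (by norm_num)
  have hint4 : Integrable (fun x : ℝ => Real.exp (-(1/4) * x ^ 2)) :=
    integrable_exp_neg_mul_sq (by norm_num)
  constructor
  · have hlow : (∫ x in Iic (0:ℝ), Real.exp (-y^2/2) * Real.exp (-(1/2) * x ^ 2))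
        ≤ ∫ x in Iic (0:ℝ), Real.exp (-(1/2) * (x - y) ^ 2) := by
      apply setIntegral_mono_on ((hint2.const_mul _).integrableOn) hint.integrableOn
        measurableSet_Iic
      intro x hx
      simp only [mem_Iic] at hx
      rw [← Real.exp_add]
      apply Real.exp_le_exp.mpr
      nlinarith [mul_nonneg (neg_nonneg.mpr hx) (neg_nonneg.mpr hy)]
    calc Real.sqrt (π / 2) * Real.exp (-(1/2) * y ^ 2)
        = ∫ x in Iic (0:ℝ), Real.exp (-y^2/2) * Real.exp (-(1/2) * x ^ 2) := by
          rw [integral_const_mul, gaussian_Iic_zero _ (by norm_num)]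
          rw [show π / (1/2) = 2^2 * (π/2) by ring, Real.sqrt_mul (by norm_num),
            Real.sqrt_sq (by norm_num : (0:ℝ) ≤ 2)]
          rw [show -y^2/2 = -(1/2)*y^2 by ring]
          ring
      _ ≤ _ := hlow
  · have hup : (∫ x in Iic (0:ℝ), Real.exp (-(1/2) * (x - y) ^ 2))
        ≤ ∫ x in Iic (0:ℝ), Real.exp (y^2/2) * Real.exp (-(1/4) * x ^ 2) := by
      apply setIntegral_mono_on hint.integrableOn ((hint4.const_mul _).integrableOn)
        measurableSet_Iic
      intro x hx
      rw [← Real.exp_add]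
      apply Real.exp_le_exp.mpr
      nlinarith [sq_nonneg (x - 2*y)]
    calc (∫ x in Iic (0:ℝ), Real.exp (-(1/2) * (x - y) ^ 2)) ≤ _ := hup
      _ = Real.sqrt π * Real.exp (y ^ 2 / 2) := by
          rw [integral_const_mul, gaussian_Iic_zero _ (by norm_num)]
          rw [show π / (1/4) = 2^2 * π by ring, Real.sqrt_mul (by norm_num),
            Real.sqrt_sq (by norm_num : (0:ℝ) ≤ 2)]
          ring
end

section
/- Let H ⊆ ℝ^d be closed, convex, closed under addition (H + H ⊆ H), with complement also closed under addition, and 0 ∈ ∂H. Then there exists y ∈ ℝ^d such that H = {x ∈ ℝ^d : ⟨x, y⟩ ≥ 0}. -/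
/-!
Convexity and additivity make `H` closed under nonnegative scalars, so `H` is a closed convex
cone; it is not the whole space because `0 ∈ ∂H`, so Farkas' lemma puts it inside a half-space
`{f ≥ 0}` with `f ≠ 0`. Conversely, additivity of the complement gives `x ∉ H → -x ∈ H`
(as `x + (-x) = 0 ∈ H`), so the open half-space `{f > 0}` lies in `H`, and so does its closure.
-/

open RealInnerProductSpace Filter Topology

section HalfSpace

theorem neg_mem_of_notMem_of_compl_add_mem {G : Type*} [AddGroup G] {H : Set G} (h0 : 0 ∈ H)
    (haddc : ∀ a ∈ Hᶜ, ∀ b ∈ Hᶜ, a + b ∈ Hᶜ) {x : G} (hx : x ∉ H) : -x ∈ H := by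
  by_contra hnx
  exact haddc x hx (-x) hnx (by rwa [add_neg_cancel])

variable {E : Type*} [AddCommGroup E] [Module ℝ E] {H : Set E}

theorem Convex.smul_mem_of_add_mem (hconv : Convex ℝ H) (h0 : 0 ∈ H)
    (hadd : ∀ a ∈ H, ∀ b ∈ H, a + b ∈ H) {x : E} (hx : x ∈ H) {t : ℝ} (ht : 0 ≤ t) :
    t • x ∈ H := by
  let S : AddSubmonoid E := ⟨⟨H, fun ha hb ↦ hadd _ ha _ hb⟩, h0⟩
  obtain ⟨n, htn⟩ := exists_nat_gt t
  have hn : (0 : ℝ) < n := ht.trans_lt htn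
  have hnx : (n : ℝ) • x ∈ H := by
    rw [Nat.cast_smul_eq_nsmul]
    exact S.nsmul_mem (show x ∈ S from hx) n
  have hmem := hconv.smul_mem_of_zero_mem h0 hnx ⟨div_nonneg ht hn.le, (div_le_one hn).2 htn.le⟩
  rwa [smul_smul, div_mul_cancel₀ _ hn.ne'] at hmem

variable [TopologicalSpace E] [IsTopologicalAddGroup E] [ContinuousSMul ℝ E]

def ProperCone.ofAddMem (hclosed : IsClosed H) (hconv : Convex ℝ H) (h0 : 0 ∈ H)
    (hadd : ∀ a ∈ H, ∀ b ∈ H, a + b ∈ H) : ProperCone ℝ E where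
  carrier := H
  add_mem' ha hb := hadd _ ha _ hb
  zero_mem' := h0
  smul_mem' c _ hx := hconv.smul_mem_of_add_mem h0 hadd hx c.2
  isClosed' := hclosed

theorem eq_setOf_nonneg_of_compl_add_mem (hclosed : IsClosed H) (h0 : 0 ∈ H)
    (haddc : ∀ a ∈ Hᶜ, ∀ b ∈ Hᶜ, a + b ∈ Hᶜ) {f : StrongDual ℝ E} (hf : ∀ x ∈ H, 0 ≤ f x)
    {v : E} (hv : 0 < f v) : H = {x | 0 ≤ f x} := by
  have hpos : ∀ x, 0 < f x → x ∈ H := fun x hx ↦ by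
    by_contra hxH
    have := hf _ (neg_mem_of_notMem_of_compl_add_mem h0 haddc hxH)
    rw [map_neg] at this
    linarith
  refine Set.Subset.antisymm hf fun x (hx : 0 ≤ f x) ↦ ?_
  have hlim : Tendsto (fun t : ℝ ↦ x + t • v) (𝓝[>] 0) (𝓝 x) := by
    simpa using (continuous_const.add (continuous_id.smul continuous_const)).continuousAt
      (f := fun t : ℝ ↦ x + t • v) (x := 0) |>.tendsto.mono_left nhdsWithin_le_nhds
  refine hclosed.mem_of_tendsto hlim <|
    eventually_nhdsWithin_of_forall fun t (ht : 0 < t) ↦ hpos _ ?_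
  rw [map_add, map_smul, smul_eq_mul]
  positivity

theorem exists_eq_setOf_nonneg_of_compl_add_mem [LocallyConvexSpace ℝ E]
    (hclosed : IsClosed H) (hconv : Convex ℝ H) (hadd : ∀ a ∈ H, ∀ b ∈ H, a + b ∈ H)
    (haddc : ∀ a ∈ Hᶜ, ∀ b ∈ Hᶜ, a + b ∈ Hᶜ) (h0 : 0 ∈ frontier H) :
    ∃ f : StrongDual ℝ E, H = {x | 0 ≤ f x} := by
  have h0H : 0 ∈ H := hclosed.frontier_subset h0
  obtain ⟨z, hz⟩ : ∃ z, z ∉ H := by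
    by_contra! hH
    simp [Set.eq_univ_of_forall hH] at h0
  obtain ⟨f, hf, hfz⟩ := (ProperCone.ofAddMem hclosed hconv h0H hadd).hyperplane_separation_point hz
  exact ⟨f, eq_setOf_nonneg_of_compl_add_mem hclosed h0H haddc hf (v := -z) (by simpa using hfz)⟩

end HalfSpace

/-- A closed convex set `H ⊆ ℝ^d` which is closed under addition, whose complement is closed
under addition, and with `0 ∈ ∂H`, is a closed half-space. -/
theorem halfspace_characterization {d : ℕ} (H : Set (EuclideanSpace ℝ (Fin d)))
    (hclosed : IsClosed H) (hconv : Convex ℝ H)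
    (hplus : ∀ a ∈ H, ∀ b ∈ H, a + b ∈ H)
    (hplusc : ∀ a ∈ Hᶜ, ∀ b ∈ Hᶜ, a + b ∈ Hᶜ)
    (h0 : (0 : EuclideanSpace ℝ (Fin d)) ∈ frontier H) :
    ∃ y : EuclideanSpace ℝ (Fin d), H = {x : EuclideanSpace ℝ (Fin d) | 0 ≤ ⟪x, y⟫} := by
  obtain ⟨f, rfl⟩ := exists_eq_setOf_nonneg_of_compl_add_mem hclosed hconv hplus hplusc h0
  refine ⟨(InnerProductSpace.toDual ℝ _).symm f, ?_⟩
  simp_rw [real_inner_comm ((InnerProductSpace.toDual ℝ _).symm f),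
    InnerProductSpace.toDual_symm_apply]
end

section
/- Let μ ≥ 0, σ > 0, r > 0, and for s > 0 set S(s) = ∑_{n=1}^∞ (e^{-rns}/n)·P[σ B_{ns} + μ·ns ≤ 0], where B is standard Brownian motion. Then (1/(2√2))·(-ln(1 - e^{-s(r+μ²/σ²)})) ≤ S(s) ≤ (1/2)·(-ln(1 - e^{-s(r+μ²/(2σ²))})), and consequently (1 - e^{-s(r+μ²/(2σ²))})^{1/2} ≤ e^{-S(s)} ≤ (1 - e^{-s(r+μ²/σ²)})^{1/(2√2)}. -/
/-!
With `a = -μt/σ ≤ 0`, `P[σB_t + μt ≤ 0]` is the `N(0, t)` mass of `(-∞, a]`. On that half-line the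
density `e^{-x²/(2t)}` lies between `e^{-a²/t} e^{-(x-a)²/t}` (as `x² ≤ 2a² + 2(x-a)²`) and
`e^{-a²/(2t)} e^{-(x-a)²/(2t)}` (as `a(x-a) ≥ 0`), and integrating the half Gaussians gives
`e^{-a²/t}/(2√2) ≤ P[σB_t + μt ≤ 0] ≤ e^{-a²/(2t)}/2`. So the `n`-th summand of `S(s)` is squeezed
between multiples of `q^n/n` for `q = e^{-s(r+μ²/σ²)}` and `q = e^{-s(r+μ²/(2σ²))}`, and
`∑ q^n/n = -log(1-q)`.
-/

open MeasureTheory ProbabilityTheory Real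

open scoped NNReal

theorem integral_Iic_exp_neg_mul_sq_sub (b a : ℝ) :
    ∫ x in Set.Iic a, exp (-b * (x - a) ^ 2) = √(π / b) / 2 := by
  have hpre : (· + a) ⁻¹' Set.Iic a = Set.Iic 0 := by ext x; simp
  have hshift : MeasurableEmbedding (· + a) := (Homeomorph.addRight a).measurableEmbedding
  rw [← Measure.IsAddRightInvariant.map_add_right_eq_self (μ := (volume : Measure ℝ)) a,
    hshift.setIntegral_map, hpre]
  simp only [add_sub_cancel_right]
  rw [← integral_gaussian_Ioi, ← neg_zero, ← integral_comp_neg_Iic]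
  simp

theorem gaussianReal_real_eq_integral (m : ℝ) {v : ℝ≥0} (hv : v ≠ 0) (s : Set ℝ) :
    (gaussianReal m v).real s = ∫ x in s, gaussianPDFReal m v x := by
  rw [measureReal_def, gaussianReal_apply_eq_integral _ hv,
    ENNReal.toReal_ofReal (integral_nonneg (gaussianPDFReal_nonneg _ _))]

theorem integral_Iic_const_mul_exp_neg_mul_sq_sub (c : ℝ) {b : ℝ} (hb : 0 < b) (a : ℝ) :
    IntegrableOn (fun x ↦ c * exp (-b * (x - a) ^ 2)) (Set.Iic a) ∧
      ∫ x in Set.Iic a, c * exp (-b * (x - a) ^ 2) = c * √(π / b) / 2 := by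
  refine ⟨?_, by rw [integral_const_mul, integral_Iic_exp_neg_mul_sq_sub, mul_div_assoc]⟩
  exact (((integrable_exp_neg_mul_sq hb).comp_sub_right a).const_mul c).integrableOn

theorem exp_neg_sq_div_le_gaussianReal_real_Iic {v : ℝ≥0} (hv : v ≠ 0) (a : ℝ) :
    exp (-a ^ 2 / v) / (2 * √2) ≤ (gaussianReal 0 v).real (Set.Iic a) := by
  have hv0 : (0 : ℝ) < v := by positivity
  obtain ⟨hint, hval⟩ := integral_Iic_const_mul_exp_neg_mul_sq_sub
    ((√(2 * π * v))⁻¹ * exp (-a ^ 2 / v)) (inv_pos.2 hv0) a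
  rw [gaussianReal_real_eq_integral _ hv]
  calc exp (-a ^ 2 / v) / (2 * √2)
      = (√(2 * π * v))⁻¹ * exp (-a ^ 2 / v) * √(π / (v : ℝ)⁻¹) / 2 := by
        rw [div_inv_eq_mul, show (2 : ℝ) * π * v = 2 * (π * v) by ring, sqrt_mul zero_le_two]
        have : 0 < √(π * v) := by positivity
        field_simp
    _ ≤ ∫ x in Set.Iic a, gaussianPDFReal 0 v x := by
        rw [← hval]
        refine setIntegral_mono_on hint (integrable_gaussianPDFReal _ _).integrableOn
          measurableSet_Iic fun x _ ↦ ?_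
        rw [gaussianPDFReal, mul_assoc, ← exp_add]
        gcongr
        have hgap : -(x - 0) ^ 2 / (2 * v) - (-a ^ 2 / v + -(v : ℝ)⁻¹ * (x - a) ^ 2)
            = (x - 2 * a) ^ 2 / (2 * v) := by
          field_simp
          ring
        linarith [div_nonneg (sq_nonneg (x - 2 * a)) (by positivity : (0 : ℝ) ≤ 2 * v)]

theorem gaussianReal_real_Iic_le_exp_neg_sq_div {v : ℝ≥0} (hv : v ≠ 0) {a : ℝ} (ha : a ≤ 0) :
    (gaussianReal 0 v).real (Set.Iic a) ≤ exp (-a ^ 2 / (2 * v)) / 2 := by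
  have hv0 : (0 : ℝ) < v := by positivity
  obtain ⟨hint, hval⟩ := integral_Iic_const_mul_exp_neg_mul_sq_sub
    ((√(2 * π * v))⁻¹ * exp (-a ^ 2 / (2 * v))) (inv_pos.2 (mul_pos two_pos hv0)) a
  rw [gaussianReal_real_eq_integral _ hv]
  calc ∫ x in Set.Iic a, gaussianPDFReal 0 v x
      ≤ (√(2 * π * v))⁻¹ * exp (-a ^ 2 / (2 * v)) * √(π / (2 * (v : ℝ))⁻¹) / 2 := by
        rw [← hval]
        refine setIntegral_mono_on (integrable_gaussianPDFReal _ _).integrableOn hint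
          measurableSet_Iic fun x hx ↦ ?_
        rw [gaussianPDFReal, mul_assoc _ (exp _), ← exp_add]
        gcongr
        have hgap : -a ^ 2 / (2 * v) + -(2 * (v : ℝ))⁻¹ * (x - a) ^ 2 - -(x - 0) ^ 2 / (2 * v)
            = 2 * a * (x - a) / (2 * v) := by
          field_simp
          ring
        have : 0 ≤ 2 * a * (x - a) := by nlinarith [Set.mem_Iic.1 hx]
        linarith [div_nonneg this (by positivity : (0 : ℝ) ≤ 2 * v)]
    _ = exp (-a ^ 2 / (2 * v)) / 2 := by
        rw [div_inv_eq_mul, show π * (2 * (v : ℝ)) = 2 * π * v by ring]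
        have : 0 < √(2 * π * v) := by positivity
        field_simp

theorem measureReal_mul_add_nonpos_eq_gaussianReal_Iic {Ω : Type*} [MeasurableSpace Ω]
    {P : Measure Ω} {X : Ω → ℝ} {v : ℝ≥0}
    (hX : Measure.map X P = gaussianReal 0 v) {σ : ℝ} (hσ : 0 < σ) (c : ℝ) :
    P.real {ω | σ * X ω + c ≤ 0} = (gaussianReal 0 v).real (Set.Iic (-c / σ)) := by
  have hXm : AEMeasurable X P := .of_map_ne_zero (by simp [hX, NeZero.ne])
  have hset : {ω | σ * X ω + c ≤ 0} = X ⁻¹' Set.Iic (-c / σ) := by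
    ext ω
    simp only [Set.mem_ofPred_eq, Set.mem_preimage, Set.mem_Iic, le_div_iff₀ hσ]
    constructor <;> intro h <;> linarith
  rw [hset, ← hX, map_measureReal_apply_of_aemeasurable hXm measurableSet_Iic]

theorem tail_bounds_of_map_eq_gaussianReal {Ω : Type*} [MeasurableSpace Ω]
    {P : Measure Ω} {X : Ω → ℝ} {t : ℝ} (ht : 0 < t)
    (hX : Measure.map X P = gaussianReal 0 t.toNNReal) {σ μ : ℝ} (hσ : 0 < σ) (hμ : 0 ≤ μ) :
    exp (-(μ ^ 2 / σ ^ 2) * t) / (2 * √2) ≤ P.real {ω | σ * X ω + μ * t ≤ 0} ∧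
      P.real {ω | σ * X ω + μ * t ≤ 0} ≤ exp (-(μ ^ 2 / (2 * σ ^ 2)) * t) / 2 := by
  have hv : t.toNNReal ≠ 0 := by simpa using ht
  have hvt : (t.toNNReal : ℝ) = t := Real.coe_toNNReal t ht.le
  rw [measureReal_mul_add_nonpos_eq_gaussianReal_Iic hX hσ]
  have ha : -(μ * t) / σ ≤ 0 := div_nonpos_of_nonpos_of_nonneg (by nlinarith) hσ.le
  constructor
  · convert exp_neg_sq_div_le_gaussianReal_real_Iic hv (-(μ * t) / σ) using 3
    rw [hvt]; field_simp
  · convert gaussianReal_real_Iic_le_exp_neg_sq_div hv ha using 3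
    rw [hvt]; field_simp

theorem mul_neg_log_one_sub_le_tsum {f : ℕ → ℝ} {c q : ℝ} (hq : |q| < 1)
    (hf : Summable f) (hle : ∀ n, c * (q ^ (n + 1) / (n + 1)) ≤ f n) :
    c * -log (1 - q) ≤ ∑' n, f n :=
  hasSum_le hle ((hasSum_pow_div_log_of_abs_lt_one hq).mul_left c)
    hf.hasSum

theorem tsum_le_mul_neg_log_one_sub {f : ℕ → ℝ} {c q : ℝ} (hq : |q| < 1)
    (hf₀ : ∀ n, 0 ≤ f n) (hle : ∀ n, f n ≤ c * (q ^ (n + 1) / (n + 1))) :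
    Summable f ∧ ∑' n, f n ≤ c * -log (1 - q) := by
  have hsum := (hasSum_pow_div_log_of_abs_lt_one hq).mul_left c
  have hf : Summable f := .of_nonneg_of_le hf₀ hle hsum.summable
  exact ⟨hf, hasSum_le hle hf.hasSum hsum⟩

theorem rpow_eq_exp_neg_mul_neg_log {x : ℝ} (hx : 0 < x) (c : ℝ) :
    x ^ c = exp (-(c * -log x)) := by
  rw [rpow_def_of_pos hx]; ring_nf

theorem exp_neg_mul_lt_one {s k : ℝ} (hs : 0 < s) (hk : 0 < k) : exp (-s * k) < 1 :=
  exp_lt_one_iff.2 (by nlinarith)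

theorem abs_exp_neg_mul_lt_one {s k : ℝ} (hs : 0 < s) (hk : 0 < k) : |exp (-s * k)| < 1 := by
  rw [abs_of_pos (exp_pos _)]
  exact exp_neg_mul_lt_one hs hk

theorem summand_bounds_of_map_eq_gaussianReal {Ω : Type*} [MeasurableSpace Ω]
    {P : Measure Ω} {σ μ : ℝ} (hσ : 0 < σ) (hμ : 0 ≤ μ) (r : ℝ)
    {s : ℝ} (hs : 0 < s) (n : ℕ) {X : Ω → ℝ}
    (hX : Measure.map X P = gaussianReal 0 ((n + 1) * s).toNNReal) :
    1 / (2 * √2) * (exp (-s * (r + μ ^ 2 / σ ^ 2)) ^ (n + 1) / (n + 1)) ≤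
        exp (-r * (n + 1) * s) / (n + 1) * P.real {ω | σ * X ω + μ * ((n + 1) * s) ≤ 0} ∧
      exp (-r * (n + 1) * s) / (n + 1) * P.real {ω | σ * X ω + μ * ((n + 1) * s) ≤ 0} ≤
        1 / 2 * (exp (-s * (r + μ ^ 2 / (2 * σ ^ 2))) ^ (n + 1) / (n + 1)) := by
  have hpow : ∀ k : ℝ, exp (-s * (r + k)) ^ (n + 1) / (n + 1)
      = exp (-r * (n + 1) * s) / (n + 1) * exp (-k * ((n + 1) * s)) := by
    intro k
    rw [← exp_nat_mul, div_mul_eq_mul_div, ← exp_add]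
    push_cast
    ring_nf
  obtain ⟨hlow, hup⟩ := tail_bounds_of_map_eq_gaussianReal (by positivity) hX hσ hμ
  rw [hpow, hpow]
  constructor
  · calc _ = exp (-r * (n + 1) * s) / (n + 1) *
          (exp (-(μ ^ 2 / σ ^ 2) * ((n + 1) * s)) / (2 * √2)) := by ring
      _ ≤ _ := by gcongr
  · calc _ ≤ exp (-r * (n + 1) * s) / (n + 1) *
          (exp (-(μ ^ 2 / (2 * σ ^ 2)) * ((n + 1) * s)) / 2) := by gcongr
      _ = _ := by ring

theorem S_bounds_nonneg_drift_general {Ω : Type*} [MeasurableSpace Ω]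
    (P : Measure Ω)
    (B : ℝ → Ω → ℝ)
    (hB : ∀ t : ℝ, 0 ≤ t → Measure.map (B t) P = gaussianReal 0 t.toNNReal)
    (σ μ r : ℝ) (hσ : 0 < σ) (hμ : 0 ≤ μ) (hr : 0 < r)
    (S : ℝ → ℝ)
    (hS : ∀ s : ℝ, 0 < s → S s = ∑' n : ℕ,
      Real.exp (-r * (n + 1) * s) / (n + 1) *
        (P {ω | σ * B ((n + 1) * s) ω + μ * ((n + 1) * s) ≤ 0}).toReal)
    (s : ℝ) (hs : 0 < s) :
    (1 / (2 * Real.sqrt 2)) * (-Real.log (1 - Real.exp (-s * (r + μ ^ 2 / σ ^ 2)))) ≤ S s ∧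
    S s ≤ (1 / 2) * (-Real.log (1 - Real.exp (-s * (r + μ ^ 2 / (2 * σ ^ 2))))) ∧
    (1 - Real.exp (-s * (r + μ ^ 2 / (2 * σ ^ 2)))) ^ ((1 : ℝ) / 2) ≤ Real.exp (-S s) ∧
    Real.exp (-S s) ≤
      (1 - Real.exp (-s * (r + μ ^ 2 / σ ^ 2))) ^ ((1 : ℝ) / (2 * Real.sqrt 2)) := by
  have hbounds n := summand_bounds_of_map_eq_gaussianReal hσ hμ r hs n (hB _ (by positivity))
  obtain ⟨hsum, hupper⟩ := tsum_le_mul_neg_log_one_sub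
    (abs_exp_neg_mul_lt_one hs (by positivity)) (fun n ↦ by positivity) (fun n ↦ (hbounds n).2)
  have hlower := mul_neg_log_one_sub_le_tsum
    (abs_exp_neg_mul_lt_one hs (by positivity)) hsum (fun n ↦ (hbounds n).1)
  simp only [measureReal_def] at hupper hlower
  rw [← hS s hs] at hupper hlower
  refine ⟨hlower, hupper, ?_, ?_⟩
  · rw [rpow_eq_exp_neg_mul_neg_log (sub_pos.2 (exp_neg_mul_lt_one hs (by positivity)))]
    exact exp_le_exp.2 (neg_le_neg hupper)
  · rw [rpow_eq_exp_neg_mul_neg_log (sub_pos.2 (exp_neg_mul_lt_one hs (by positivity)))]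
    exact exp_le_exp.2 (neg_le_neg hlower)

/-- Bounds on `S(s) = ∑_{n≥1} (e^{-rns}/n)·P[σB_{ns} + μns ≤ 0]` for `μ ≥ 0`:
`(1/(2√2))·(-ln(1-e^{-s(r+μ²/σ²)})) ≤ S(s) ≤ (1/2)·(-ln(1-e^{-s(r+μ²/(2σ²))}))`, and hence
`(1-e^{-s(r+μ²/(2σ²))})^{1/2} ≤ e^{-S(s)} ≤ (1-e^{-s(r+μ²/σ²)})^{1/(2√2)}`. -/
theorem S_bounds_nonneg_drift {Ω : Type*} [MeasurableSpace Ω]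
    (P : Measure Ω) [IsProbabilityMeasure P]
    (B : ℝ → Ω → ℝ)
    (hB : ∀ t : ℝ, 0 ≤ t → Measure.map (B t) P = gaussianReal 0 t.toNNReal)
    (σ μ r : ℝ) (hσ : 0 < σ) (hμ : 0 ≤ μ) (hr : 0 < r)
    (S : ℝ → ℝ)
    (hS : ∀ s : ℝ, 0 < s → S s = ∑' n : ℕ,
      Real.exp (-r * (n + 1) * s) / (n + 1) *
        (P {ω | σ * B ((n + 1) * s) ω + μ * ((n + 1) * s) ≤ 0}).toReal)
    (s : ℝ) (hs : 0 < s) :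
    (1 / (2 * Real.sqrt 2)) * (-Real.log (1 - Real.exp (-s * (r + μ ^ 2 / σ ^ 2)))) ≤ S s ∧
    S s ≤ (1 / 2) * (-Real.log (1 - Real.exp (-s * (r + μ ^ 2 / (2 * σ ^ 2))))) ∧
    (1 - Real.exp (-s * (r + μ ^ 2 / (2 * σ ^ 2)))) ^ ((1 : ℝ) / 2) ≤ Real.exp (-S s) ∧
    Real.exp (-S s) ≤
      (1 - Real.exp (-s * (r + μ ^ 2 / σ ^ 2))) ^ ((1 : ℝ) / (2 * Real.sqrt 2)) :=
  S_bounds_nonneg_drift_general P B hB σ μ r hσ hμ hr S hS s hs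
end

section
/- Let μ ≤ 0, σ > 0, r > μ²/(2σ²). Then there exist constants c₁, C₁ > 0 such that for all sufficiently small s > 0, c₁·s^{1/√2} ≤ exp(-∑_{n=1}^∞ (e^{-rns}/n)·P[σB_{ns} + μns ≤ 0]) ≤ C₁·s^{1/2}. -/
/-! Each probability in the series is a standard Gaussian CDF at `|μ|√(ns)/σ ≥ 0`, hence at least
`1/2`; since the density is at most `1/√(2π)` and `1/2 + x/√(2π) ≤ e^{x²/2}/√2`, it is at most
`e^{μ²ns/(2σ²)}/√2`. Comparing the series termwise with `∑ qⁿ/n = -log (1 - q)` for `q = e^{-rs}`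
and `q = e^{-(r - μ²/(2σ²))s}` traps `e^{-S(s)}` between `(1 - e^{-(r - μ²/(2σ²))s})^{1/√2}` and
`(1 - e^{-rs})^{1/2}`, and `u/2 ≤ 1 - e^{-u} ≤ u` on `[0, 1]` turns these into powers of `s`. -/

open MeasureTheory ProbabilityTheory Real Set
open scoped NNReal

lemma half_add_div_sqrt_two_pi_le (x : ℝ) :
    1 / 2 + x / √(2 * π) ≤ exp (x ^ 2 / 2) / √2 := by
  have h_sqrt2 : √2 ^ 2 = 2 := sq_sqrt (by norm_num)
  have h_sqrt2pi : √(2 * π) ^ 2 = 2 * π := sq_sqrt (by positivity)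
  have h_sqrt2_le : √2 ≤ 3 / 2 := by nlinarith [sqrt_nonneg 2]
  have h_sqrt2pi_ge : 2 ≤ √(2 * π) := by nlinarith [sqrt_nonneg (2 * π), pi_gt_three]
  have h_quad : 1 / 2 + x / √(2 * π) ≤ (1 + x ^ 2 / 2) / √2 := by
    rw [div_add_div _ _ (by norm_num) (by positivity), div_le_div_iff₀ (by positivity) (by positivity)]
    -- `(x√(2π) - √2)² ≥ 0` together with `2π(2 - √2) ≥ 2`
    nlinarith [sq_nonneg (x * √(2 * π) - √2), sqrt_nonneg (2 * π), sqrt_nonneg 2]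
  calc 1 / 2 + x / √(2 * π) ≤ (1 + x ^ 2 / 2) / √2 := h_quad
    _ ≤ exp (x ^ 2 / 2) / √2 := by gcongr; linarith [add_one_le_exp (x ^ 2 / 2)]

lemma one_sub_exp_neg_le (u : ℝ) : 1 - exp (-u) ≤ u := by
  linarith [one_sub_le_exp_neg u]

lemma half_le_one_sub_exp_neg {u : ℝ} (hu₀ : 0 ≤ u) (hu₁ : u ≤ 1) : u / 2 ≤ 1 - exp (-u) := by
  -- `e^{-u} ≤ 1/(1 + u) ≤ 1 - u/2` when `u ≤ 1`
  have h_inv : exp (-u) * exp u = 1 := by rw [← exp_add, neg_add_cancel, exp_zero]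
  nlinarith [add_one_le_exp u, exp_pos (-u)]

namespace ProbabilityTheory

variable {m : ℝ} {v : ℝ≥0}

lemma gaussianReal_real_Iic_mean (hv : v ≠ 0) : (gaussianReal m v).real (Iic m) = 1 / 2 := by
  have h_symm : (gaussianReal m v).real (Iic m) = (gaussianReal m v).real (Ici m) := by
    have hmap : (gaussianReal m v).map (2 * m - ·) = gaussianReal m v := by
      rw [gaussianReal_map_const_sub]; ring_nf
    conv_lhs => rw [← hmap]
    rw [map_measureReal_apply (by fun_prop) measurableSet_Iic]
    congr 1; ext x; simp [two_mul]
  have h_atom : (gaussianReal m v).real (Iio m) = (gaussianReal m v).real (Iic m) :=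
    measureReal_congr ((gaussianReal_absolutelyContinuous m hv).ae_eq Iio_ae_eq_Iic)
  have h_compl := probReal_compl_eq_one_sub (μ := gaussianReal m v) (measurableSet_Ici (a := m))
  rw [compl_Ici, h_atom, ← h_symm] at h_compl
  linarith

lemma gaussianPDFReal_le_inv_sqrt (m : ℝ) (v : ℝ≥0) (x : ℝ) :
    gaussianPDFReal m v x ≤ (√(2 * π * v))⁻¹ := by
  rw [gaussianPDFReal]
  refine mul_le_of_le_one_right (by positivity) (exp_le_one_iff.2 ?_)
  rw [neg_div]
  exact neg_nonpos.2 (by positivity)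

lemma gaussianReal_real_Iic_le (hv : v ≠ 0) {c : ℝ} (hc : m ≤ c) :
    (gaussianReal m v).real (Iic c) ≤ 1 / 2 + (c - m) / √(2 * π * v) := by
  have h_split : (gaussianReal m v).real (Iic c)
      = (gaussianReal m v).real (Iic m) + (gaussianReal m v).real (Ioc m c) := by
    rw [← Iic_union_Ioc_eq_Iic hc, measureReal_union (Iic_disjoint_Ioc le_rfl) measurableSet_Ioc]
  have h_Ioc : (gaussianReal m v).real (Ioc m c) ≤ (c - m) / √(2 * π * v) := by
    rw [measureReal_def, gaussianReal_apply_eq_integral m hv, ENNReal.toReal_ofReal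
      (setIntegral_nonneg measurableSet_Ioc fun x _ => gaussianPDFReal_nonneg _ _ _)]
    calc ∫ x in Ioc m c, gaussianPDFReal m v x
        ≤ ∫ _ in Ioc m c, (√(2 * π * v))⁻¹ :=
          setIntegral_mono_on (integrable_gaussianPDFReal m v).integrableOn
            (integrableOn_const (by simp)) measurableSet_Ioc
            fun x _ => gaussianPDFReal_le_inv_sqrt m v x
      _ = (c - m) / √(2 * π * v) := by
          rw [setIntegral_const, Real.volume_real_Ioc_of_le hc, smul_eq_mul, div_eq_mul_inv]
  rw [h_split, gaussianReal_real_Iic_mean hv]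
  linarith

lemma half_le_gaussianReal_real_Iic (hv : v ≠ 0) {c : ℝ} (hc : m ≤ c) :
    1 / 2 ≤ (gaussianReal m v).real (Iic c) :=
  gaussianReal_real_Iic_mean hv ▸ measureReal_mono (Iic_subset_Iic.2 hc)

lemma gaussianReal_real_Iic_le_exp (hv : v ≠ 0) {c : ℝ} (hc : m ≤ c) :
    (gaussianReal m v).real (Iic c) ≤ exp ((c - m) ^ 2 / v / 2) / √2 := by
  have hv_pos : (0 : ℝ) < v := by positivity
  have h_std : (c - m) / √(2 * π * v) = (c - m) / √v / √(2 * π) := by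
    rw [sqrt_mul (by positivity), div_div, mul_comm]
  calc (gaussianReal m v).real (Iic c) ≤ 1 / 2 + (c - m) / √v / √(2 * π) :=
        h_std ▸ gaussianReal_real_Iic_le hv hc
    _ ≤ exp (((c - m) / √v) ^ 2 / 2) / √2 :=
        half_add_div_sqrt_two_pi_le _
    _ = exp ((c - m) ^ 2 / v / 2) / √2 := by rw [div_pow, sq_sqrt hv_pos.le]

lemma measureReal_drift_le_zero_mem_Icc {Ω : Type*} [MeasurableSpace Ω] {P : Measure Ω}
    {X : Ω → ℝ} {t σ μ : ℝ} (ht : 0 < t) (hX : P.map X = gaussianReal 0 t.toNNReal)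
    (hσ : 0 < σ) (hμ : μ ≤ 0) :
    P.real {ω | σ * X ω + μ * t ≤ 0} ∈ Icc (1 / 2) (exp (μ ^ 2 / (2 * σ ^ 2) * t) / √2) := by
  have hv : t.toNNReal ≠ 0 := by simpa using ht
  have hc : 0 ≤ -(μ * t) / σ := div_nonneg (by nlinarith) hσ.le
  have h_event : {ω | σ * X ω + μ * t ≤ 0} = X ⁻¹' Iic (-(μ * t) / σ) := by
    ext ω
    simp only [mem_ofPred_eq, mem_preimage, mem_Iic, le_div_iff₀ hσ]
    constructor <;> intro <;> linarith
  have hX_meas : AEMeasurable X P := .of_map_ne_zero (hX ▸ IsProbabilityMeasure.ne_zero _)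
  rw [h_event, ← map_measureReal_apply_of_aemeasurable hX_meas measurableSet_Iic, hX]
  refine ⟨half_le_gaussianReal_real_Iic hv hc, (gaussianReal_real_Iic_le_exp hv hc).trans_eq ?_⟩
  rw [Real.coe_toNNReal t ht.le, sub_zero]
  congr 1
  field_simp

end ProbabilityTheory

lemma exp_neg_tsum_le_one_sub_rpow {g : ℕ → ℝ} {a q : ℝ} (hq : |q| < 1) (hg : Summable g)
    (h : ∀ n : ℕ, a * (q ^ (n + 1) / (n + 1)) ≤ g n) : exp (-∑' n, g n) ≤ (1 - q) ^ a := by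
  have h_log := (hasSum_pow_div_log_of_abs_lt_one hq).mul_left a
  rw [rpow_def_of_pos (by linarith [le_abs_self q]), exp_le_exp]
  linarith [hasSum_le h h_log hg.hasSum]

lemma one_sub_rpow_le_exp_neg_tsum {g : ℕ → ℝ} {A q : ℝ} (hq : |q| < 1) (hg : Summable g)
    (h : ∀ n : ℕ, g n ≤ A * (q ^ (n + 1) / (n + 1))) : (1 - q) ^ A ≤ exp (-∑' n, g n) := by
  have h_log := (hasSum_pow_div_log_of_abs_lt_one hq).mul_left A
  rw [rpow_def_of_pos (by linarith [le_abs_self q]), exp_le_exp]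
  linarith [hasSum_le h hg.hasSum h_log]

lemma exp_neg_tsum_mem_Icc {r a s c C : ℝ} {p : ℕ → ℝ} (hs : 0 < s) (hr : 0 < r) (har : a < r)
    (hc : 0 ≤ c) (hp : ∀ n : ℕ, p n ∈ Icc c (C * exp (a * ((n + 1) * s)))) :
    exp (-∑' n : ℕ, exp (-r * (n + 1) * s) / (n + 1) * p n) ∈
      Icc ((1 - exp (-((r - a) * s))) ^ C) ((1 - exp (-(r * s))) ^ c) := by
  have h_pow (b : ℝ) (n : ℕ) : exp (-(b * s)) ^ (n + 1) = exp (-b * (n + 1) * s) := by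
    rw [← exp_nat_mul]; push_cast; ring_nf
  have h_abs {b : ℝ} (hb : 0 < b) : |exp (-(b * s))| < 1 := by
    rw [abs_of_pos (exp_pos _), exp_lt_one_iff, neg_lt_zero]; positivity
  have h_lower (n : ℕ) : c * (exp (-(r * s)) ^ (n + 1) / (n + 1))
      ≤ exp (-r * (n + 1) * s) / (n + 1) * p n := by
    rw [h_pow, mul_comm]; gcongr; exact (hp n).1
  have h_upper (n : ℕ) : exp (-r * (n + 1) * s) / (n + 1) * p n
      ≤ C * (exp (-((r - a) * s)) ^ (n + 1) / (n + 1)) := by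
    calc exp (-r * (n + 1) * s) / (n + 1) * p n
        ≤ exp (-r * (n + 1) * s) / (n + 1) * (C * exp (a * ((n + 1) * s))) := by
          gcongr; exact (hp n).2
      _ = C * (exp (-((r - a) * s)) ^ (n + 1) / (n + 1)) := by
          rw [h_pow, mul_div_assoc', div_mul_eq_mul_div, mul_left_comm, ← exp_add]; ring_nf
  have h_summable : Summable fun n : ℕ ↦ exp (-r * (n + 1) * s) / (n + 1) * p n :=
    .of_nonneg_of_le (fun n ↦ (mul_nonneg hc (by positivity)).trans (h_lower n)) h_upper
      ((hasSum_pow_div_log_of_abs_lt_one (h_abs (sub_pos.2 har))).mul_left C).summable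
  exact ⟨one_sub_rpow_le_exp_neg_tsum (h_abs (sub_pos.2 har)) h_summable h_upper,
    exp_neg_tsum_le_one_sub_rpow (h_abs hr) h_summable h_lower⟩

theorem scaling_nonpos_drift_general {Ω : Type*} [MeasurableSpace Ω]
    (P : Measure Ω)
    (B : ℝ → Ω → ℝ)
    (hB : ∀ t : ℝ, 0 ≤ t → Measure.map (B t) P = gaussianReal 0 t.toNNReal)
    (σ μ r : ℝ) (hσ : 0 < σ) (hμ : μ ≤ 0) (hr : μ ^ 2 / (2 * σ ^ 2) < r)
    (S : ℝ → ℝ)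
    (hS : ∀ s : ℝ, 0 < s → S s = ∑' n : ℕ,
      Real.exp (-r * (n + 1) * s) / (n + 1) *
        (P {ω | σ * B ((n + 1) * s) ω + μ * ((n + 1) * s) ≤ 0}).toReal) :
    ∃ c₁ C₁ : ℝ, 0 < c₁ ∧ 0 < C₁ ∧ ∃ s₀ : ℝ, 0 < s₀ ∧ ∀ s : ℝ, 0 < s → s ≤ s₀ →
      c₁ * s ^ ((1 : ℝ) / Real.sqrt 2) ≤ Real.exp (-S s) ∧
      Real.exp (-S s) ≤ C₁ * s ^ ((1 : ℝ) / 2) := by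
  set a := μ ^ 2 / (2 * σ ^ 2)
  have hr₀ : 0 < r := (by positivity : 0 ≤ a).trans_lt hr
  have hra : 0 < r - a := sub_pos.2 hr
  refine ⟨((r - a) / 2) ^ (1 / √2), r ^ (1 / 2 : ℝ), by positivity, by positivity, 1 / (r - a),
    by positivity, fun s hs hs₀ => ?_⟩
  have h_prob (n : ℕ) : P.real {ω | σ * B ((n + 1) * s) ω + μ * ((n + 1) * s) ≤ 0} ∈
      Icc (1 / 2) (1 / √2 * exp (a * ((n + 1) * s))) := by
    have ht : (0 : ℝ) < (n + 1) * s := by positivity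
    rw [one_div_mul_eq_div]
    exact measureReal_drift_le_zero_mem_Icc ht (hB _ ht.le) hσ hμ
  obtain ⟨h_lower, h_upper⟩ := exp_neg_tsum_mem_Icc hs hr₀ hr (by norm_num) h_prob
  simp only [measureReal_def] at h_lower h_upper
  rw [hS s hs]
  have hs_small : (r - a) * s ≤ 1 := by rwa [le_div_iff₀' hra] at hs₀
  constructor
  · calc ((r - a) / 2) ^ (1 / √2) * s ^ (1 / √2) = ((r - a) * s / 2) ^ (1 / √2) := by
          rw [← mul_rpow (by positivity) hs.le, div_mul_eq_mul_div]
      _ ≤ (1 - exp (-((r - a) * s))) ^ (1 / √2) := by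
          gcongr; exact half_le_one_sub_exp_neg (by positivity) hs_small
      _ ≤ _ := h_lower
  · calc _ ≤ (1 - exp (-(r * s))) ^ (1 / 2 : ℝ) := h_upper
      _ ≤ (r * s) ^ (1 / 2 : ℝ) := by
          gcongr
          · exact sub_nonneg.2 (exp_le_one_iff.2 (neg_nonpos.2 (by positivity)))
          · exact one_sub_exp_neg_le _
      _ = r ^ (1 / 2 : ℝ) * s ^ (1 / 2 : ℝ) := mul_rpow hr₀.le hs.le

/-- Natural scaling, nonpositive drift with `r > μ²/(2σ²)`: there are `c₁, C₁ > 0` with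
`c₁·s^{1/√2} ≤ exp(-S(s)) ≤ C₁·s^{1/2}` for all sufficiently small `s > 0`. -/
theorem scaling_nonpos_drift {Ω : Type*} [MeasurableSpace Ω]
    (P : Measure Ω) [IsProbabilityMeasure P]
    (B : ℝ → Ω → ℝ)
    (hB : ∀ t : ℝ, 0 ≤ t → Measure.map (B t) P = gaussianReal 0 t.toNNReal)
    (σ μ r : ℝ) (hσ : 0 < σ) (hμ : μ ≤ 0) (hr : μ ^ 2 / (2 * σ ^ 2) < r)
    (S : ℝ → ℝ)
    (hS : ∀ s : ℝ, 0 < s → S s = ∑' n : ℕ,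
      Real.exp (-r * (n + 1) * s) / (n + 1) *
        (P {ω | σ * B ((n + 1) * s) ω + μ * ((n + 1) * s) ≤ 0}).toReal) :
    ∃ c₁ C₁ : ℝ, 0 < c₁ ∧ 0 < C₁ ∧ ∃ s₀ : ℝ, 0 < s₀ ∧ ∀ s : ℝ, 0 < s → s ≤ s₀ →
      c₁ * s ^ ((1 : ℝ) / Real.sqrt 2) ≤ Real.exp (-S s) ∧
      Real.exp (-S s) ≤ C₁ * s ^ ((1 : ℝ) / 2) :=
  scaling_nonpos_drift_general P B hB σ μ r hσ hμ hr S hS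
end
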